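/- Let Γ be a countable group and let Γ ↷ (X,μ) be an ergodic p.m.p. action on a standard probability space that is ℤ-cocycle superrigid. Then the action is strongly ergodic. -/

import Mathlib

/-!  Common definitions: wreath products, measured group actions, orbit equivalence,
measure equivalence, measurable splittings, cocycle superrigidity, and cofinitely
equivariant maps.  -/

open MeasureTheory Function Filter Set
open scoped ENNReal

namespace OEW


/-! ### Restricted direct sums and wreath products of groups -/

/-- The restricted direct sum `⊕_V B`: the subgroup of `V → B` consisting of finitely
supported functions (support = coordinates where the value is not `1`). -/
def dsum (V B : Type) [Group B] : Subgroup (V → B) where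
  carrier := {f | (Function.mulSupport f).Finite}
  one_mem' := by
    simp
  mul_mem' := fun {f g} hf hg =>
    Set.Finite.subset (Set.Finite.union hf hg) (Function.mulSupport_mul f g)
  inv_mem' := fun {f} hf => by simpa [Function.mulSupport_inv] using hf

variable {V B Γ : Type}

/-- The shift of a finitely supported function by `γ`. -/
def shiftSubtype [Group B] [Group Γ] [MulAction Γ V] (γ : Γ) (f : dsum V B) : dsum V B :=
  ⟨fun v => (f : V → B) (γ⁻¹ • v), by
    have h : (Function.mulSupport fun v => (f : V → B) (γ⁻¹ • v)) ⊆
        (fun v => γ⁻¹ • v) ⁻¹' Function.mulSupport (f : V → B) := fun v hv => hv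
    exact Set.Finite.subset
      (Set.Finite.preimage ((MulAction.injective (γ⁻¹ : Γ)).injOn) f.2) h⟩

/-- The shift by `γ` as an automorphism of the restricted direct sum. -/
def shiftEquiv [Group B] [Group Γ] [MulAction Γ V] (γ : Γ) : dsum V B ≃* dsum V B where
  toFun := shiftSubtype γ
  invFun := shiftSubtype γ⁻¹
  left_inv f := Subtype.ext (funext fun v => by simp [shiftSubtype])
  right_inv f := Subtype.ext (funext fun v => by simp [shiftSubtype])
  map_mul' f g := rfl

/-- The left shift action of `Γ` on `⊕_V B` as a homomorphism into the automorphism group. -/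
def shiftHom (V B Γ : Type) [Group B] [Group Γ] [MulAction Γ V] :
    Γ →* MulAut (dsum V B) where
  toFun γ := shiftEquiv γ
  map_one' := MulEquiv.ext fun f => Subtype.ext (funext fun v => by
    simp [shiftEquiv, shiftSubtype])
  map_mul' γ₁ γ₂ := MulEquiv.ext fun f => Subtype.ext (funext fun v => by
    simp [shiftEquiv, shiftSubtype, mul_smul]
    rfl)

/-- The (restricted) permutational wreath product `B ≀_V Γ = (⊕_V B) ⋊ Γ`. -/
abbrev pwreath (V B Γ : Type) [Group B] [Group Γ] [MulAction Γ V] : Type :=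
  SemidirectProduct (dsum V B) Γ (shiftHom V B Γ)

/-- The (restricted) regular wreath product `B ≀ Γ = (⊕_Γ B) ⋊ Γ`. -/
abbrev wreath (B Γ : Type) [Group B] [Group Γ] : Type := pwreath Γ B Γ


/-- The shift ("generalized Bernoulli") action on `V → X`. -/
def shiftS [Group Γ] [MulAction Γ V] (γ : Γ) (x : V → X) : V → X :=
  fun v => x (γ⁻¹ • v)

variable {V B C Γ X Y Z : Type}

/-- The wreath product action: given an action `β : B → X → X`, the induced action of the
wreath product `B ≀_V Γ` on `V → X`. -/
def wreathSmul [Group B] [Group Γ] [MulAction Γ V] (β : B → X → X)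
    (g : pwreath V B Γ) (x : V → X) : V → X :=
  fun v => β ((g.left : V → B) v) (x (g.right⁻¹ • v))

/-- The coordinatewise action of the restricted direct sum `⊕_V B` on `V → X`. -/
def dsumSmul [Group B] (β : B → X → X) (b : dsum V B) (x : V → X) : V → X :=
  fun v => β ((b : V → B) v) (x v)

/-! ### Measured group actions, given by explicit action maps -/

/-- `a` is a measure preserving group action of `G` on `(X, μ)`. -/
def IsMpAction {G : Type} [Group G] [MeasurableSpace X] (a : G → X → X) (μ : Measure X) : Prop :=
  (∀ x, a 1 x = x) ∧ (∀ g h x, a (g * h) x = a g (a h x)) ∧ ∀ g, MeasurePreserving (a g) μ μ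

/-- A probability measure preserving (p.m.p.) action. -/
def IsPmpAction {G : Type} [Group G] [MeasurableSpace X] (a : G → X → X) (μ : Measure X) : Prop :=
  IsProbabilityMeasure μ ∧ IsMpAction a μ

/-- The action is (essentially) free. -/
def IsFreeAction {G : Type} [Group G] [MeasurableSpace X] (a : G → X → X) (μ : Measure X) : Prop :=
  ∀ᵐ x ∂μ, ∀ g : G, a g x = x → g = 1

/-- The action is ergodic: every invariant measurable set is null or conull. -/
def IsErgodicAction {G : Type} [Group G] [MeasurableSpace X] (a : G → X → X) (μ : Measure X) :
    Prop :=
  ∀ A : Set X, MeasurableSet A → (∀ g : G, a g ⁻¹' A = A) → μ A = 0 ∨ μ Aᶜ = 0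

/-- The action is totally ergodic: every infinite subgroup acts ergodically. -/
def IsTotallyErgodic {G : Type} [Group G] [MeasurableSpace X] (a : G → X → X) (μ : Measure X) :
    Prop :=
  ∀ H : Subgroup G, (H : Set G).Infinite → IsErgodicAction (fun (h : H) x => a (h : G) x) μ

/-- `φ` is a measure space isomorphism from `(X,μ)` to `(Y,ν)`: a measure preserving
measurable map admitting an a.e. two-sided measurable inverse. -/
def IsMeasureIso [MeasurableSpace X] [MeasurableSpace Y] (μ : Measure X) (ν : Measure Y)
    (φ : X → Y) : Prop :=
  MeasurePreserving φ μ ν ∧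
    ∃ ψ : Y → X, Measurable ψ ∧ (∀ᵐ x ∂μ, ψ (φ x) = x) ∧ (∀ᵐ y ∂ν, φ (ψ y) = y)

/-- `φ` is an orbit equivalence between the actions `a : G → X → X` and `b : H → Y → Y`:
a measure space isomorphism with `φ(G⬝x) = H⬝φ(x)` for a.e. `x`. -/
def IsOrbitEquivalence {G H : Type} [MeasurableSpace X] [MeasurableSpace Y]
    (a : G → X → X) (b : H → Y → Y) (μ : Measure X) (ν : Measure Y) (φ : X → Y) : Prop :=
  IsMeasureIso μ ν φ ∧
    ∀ᵐ x ∂μ, (∀ g : G, ∃ h : H, φ (a g x) = b h (φ x)) ∧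
      (∀ h : H, ∃ g : G, b h (φ x) = φ (a g x))

/-- The two actions are orbit equivalent. -/
def OrbitEquivalentActions {G H : Type} [MeasurableSpace X] [MeasurableSpace Y]
    (a : G → X → X) (b : H → Y → Y) (μ : Measure X) (ν : Measure Y) : Prop :=
  ∃ φ : X → Y, IsOrbitEquivalence a b μ ν φ

/-- `m` is the product, over the index set `ι`, of copies of the probability measure `ν`. -/
def IsProductMeasure {ι : Type} [MeasurableSpace X] (ν : Measure X) (m : Measure (ι → X)) :
    Prop :=
  IsProbabilityMeasure m ∧
    ∀ (s : Finset ι) (A : ι → Set X), (∀ i, MeasurableSet (A i)) →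
      m {x | ∀ i ∈ s, x i ∈ A i} = ∏ i ∈ s, ν (A i)

/-- A group is amenable if it admits a left translation invariant, finitely additive
probability measure defined on all of its subsets. -/
def IsAmenable (G : Type) [Group G] : Prop :=
  ∃ m : Set G → ℝ,
    (∀ A : Set G, 0 ≤ m A) ∧ m Set.univ = 1 ∧
    (∀ A B : Set G, Disjoint A B → m (A ∪ B) = m A + m B) ∧
    ∀ (g : G) (A : Set G), m ((g * ·) '' A) = m A

/-! ### Bundled p.m.p. actions on standard probability spaces -/

/-- A p.m.p. action of `G` on a standard probability space, bundled. -/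
structure PmpSystem (G : Type) [Group G] : Type 1 where
  (X : Type)
  [mX : MeasurableSpace X]
  (μ : Measure X)
  (act : G → X → X)
  (standardBorel : StandardBorelSpace X)
  (isProb : IsProbabilityMeasure μ)
  (pmp : IsMpAction act μ)

/-- The bundled action is (essentially) free. -/
def PmpSystem.Free {G : Type} [Group G] (S : PmpSystem G) : Prop :=
  ∀ᵐ x ∂S.μ, ∀ g : G, S.act g x = x → g = 1

/-- The bundled action is ergodic. -/
def PmpSystem.ErgodicAct {G : Type} [Group G] (S : PmpSystem G) : Prop :=
  ∀ A : Set S.X, MeasurableSet[S.mX] A → (∀ g : G, S.act g ⁻¹' A = A) → S.μ A = 0 ∨ S.μ Aᶜ = 0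

/-- Two countable groups are orbit equivalent if they admit orbit equivalent free ergodic
p.m.p. actions on standard probability spaces. -/
def GroupsOrbitEquivalent (G H : Type) [Group G] [Group H] : Prop :=
  ∃ (S : PmpSystem G) (T : PmpSystem H),
    letI := S.mX
    letI := T.mX
    S.Free ∧ T.Free ∧ S.ErgodicAct ∧ T.ErgodicAct ∧
      OrbitEquivalentActions S.act T.act S.μ T.μ

/-! ### Measure equivalence -/

/-- `s` is a measurable fundamental domain for the action `a` on `(Ω, m)`. -/
def IsFundDomain {G Ω : Type} [MeasurableSpace Ω] (a : G → Ω → Ω) (s : Set Ω)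
    (m : Measure Ω) : Prop :=
  MeasurableSet s ∧ (∀ᵐ x ∂m, ∃ g : G, a g x ∈ s) ∧
    ∀ g g' : G, g ≠ g' → m (a g '' s ∩ a g' '' s) = 0

/-- A measure equivalence coupling of `G` with `H`: commuting measure preserving actions on
a standard nonzero σ-finite measure space, each admitting a finite measure measurable
fundamental domain. -/
structure MECoupling (G H : Type) [Group G] [Group H] : Type 1 where
  (Ω : Type)
  [mΩ : MeasurableSpace Ω]
  (m : Measure Ω)
  (aG : G → Ω → Ω)
  (aH : H → Ω → Ω)
  (standardBorel : StandardBorelSpace Ω)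
  (sigmaFinite : SigmaFinite m)
  (nonzero : m ≠ 0)
  (mpG : IsMpAction aG m)
  (mpH : IsMpAction aH m)
  (comm : ∀ (g : G) (h : H) (x : Ω), aG g (aH h x) = aH h (aG g x))
  (FG : Set Ω)
  (FH : Set Ω)
  (fundG : IsFundDomain aG FG m)
  (fundH : IsFundDomain aH FH m)
  (finG : m FG < ⊤)
  (finH : m FH < ⊤)

/-- `G` and `H` are measure equivalent. -/
def MeasureEquivalent (G H : Type) [Group G] [Group H] : Prop :=
  Nonempty (MECoupling G H)

/-- `G` and `H` admit a measure equivalence coupling of coupling index `α`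
(the ratio of the measures of the `H`- and `G`-fundamental domains). -/
def MeasureEquivalentWithIndex (G H : Type) [Group G] [Group H] (α : ℝ≥0∞) : Prop :=
  ∃ c : MECoupling G H, c.m c.FH = α * c.m c.FG



variable {X : Type}

/-! ### Countable Borel equivalence relations and measurable splittings -/

/-- `R` is a p.m.p. countable Borel equivalence relation on `(X, μ)`: every Borel bijection
between Borel subsets whose graph is contained in `R` preserves `μ`. -/
def IsPmpCBER [MeasurableSpace X] (R : X → X → Prop) (μ : Measure X) : Prop :=
  Equivalence R ∧ MeasurableSet {p : X × X | R p.1 p.2} ∧ (∀ x, {y | R x y}.Countable) ∧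
    ∀ (f : X → X) (A B : Set X), Measurable f → MeasurableSet A → MeasurableSet B →
      Set.BijOn f A B → (∀ x ∈ A, R x (f x)) →
      ∀ C : Set X, MeasurableSet C → C ⊆ B → μ (A ∩ f ⁻¹' C) = μ C

/-- The relation `R` is ergodic with respect to `μ`. -/
def IsErgodicRel [MeasurableSpace X] (R : X → X → Prop) (μ : Measure X) : Prop :=
  ∀ A : Set X, MeasurableSet A → (∀ x y, R x y → (x ∈ A ↔ y ∈ A)) → μ A = 0 ∨ μ Aᶜ = 0

/-- The subrelations `R₀` and `R₁` are freely independent: there is no reduced cycle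
alternating between nontrivial `R₀`-steps and `R₁`-steps. -/
def FreelyIndepRel (R₀ R₁ : X → X → Prop) : Prop :=
  ¬ ∃ (n : ℕ) (i : ℕ → Fin 2) (x : ℕ → X),
      2 ≤ n ∧ x n = x 0 ∧ (∀ j < n, x j ≠ x (j + 1)) ∧
      (∀ j, j + 1 < n → i j ≠ i (j + 1)) ∧
      (∀ j < n, if i j = 0 then R₀ (x j) (x (j + 1)) else R₁ (x j) (x (j + 1)))

/-- `R` splits as the free product `R = R₀ ∗ R₁`: `R₀` and `R₁` are freely independent
subequivalence relations generating `R`. -/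
def SplitsAs (R R₀ R₁ : X → X → Prop) : Prop :=
  Equivalence R₀ ∧ Equivalence R₁ ∧ (∀ x y, R₀ x y → R x y) ∧ (∀ x y, R₁ x y → R x y) ∧
    FreelyIndepRel R₀ R₁ ∧
    ∀ x y, R x y ↔ Relation.EqvGen (fun u v => R₀ u v ∨ R₁ u v) x y

/-- The splitting `R = R₀ ∗ R₁` is inessential on the (invariant) set `C`. -/
def InessentialOn [MeasurableSpace X] (R R₀ R₁ : X → X → Prop) (C : Set X) : Prop :=
  ∃ X₀ X₁ : Set X, MeasurableSet X₀ ∧ MeasurableSet X₁ ∧ X₀ ∪ X₁ = C ∧ Disjoint X₀ X₁ ∧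
    (∀ x ∈ C, ∀ y ∈ C, R x y → (x ∈ X₀ ↔ y ∈ X₀)) ∧
    ∃ U₀ U₁ : Set X, MeasurableSet U₀ ∧ MeasurableSet U₁ ∧ U₀ ⊆ X₀ ∧ U₁ ⊆ X₁ ∧
      (∀ x ∈ X₀, ∃ y ∈ U₀, R x y) ∧ (∀ x ∈ X₁, ∃ y ∈ U₁, R x y) ∧
      (∀ x ∈ U₀, ∀ y ∈ U₀, (R x y ↔ R₀ x y)) ∧ (∀ x ∈ U₁, ∀ y ∈ U₁, (R x y ↔ R₁ x y))

/-- The splitting is `μ`-essential: there is no `R`-invariant `μ`-conull Borel set on which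
it is inessential. -/
def MuEssential [MeasurableSpace X] (μ : Measure X) (R R₀ R₁ : X → X → Prop) : Prop :=
  ¬ ∃ C : Set X, MeasurableSet C ∧ μ Cᶜ = 0 ∧ (∀ x y, R x y → (x ∈ C ↔ y ∈ C)) ∧
      InessentialOn R R₀ R₁ C

/-- `R = R₀ ∗ R₁` is a `μ`-essential splitting. -/
def EssentialSplitting [MeasurableSpace X] (μ : Measure X) (R R₀ R₁ : X → X → Prop) : Prop :=
  SplitsAs R R₀ R₁ ∧ MuEssential μ R R₀ R₁

/-- The orbit equivalence relation of an action given by `a`. -/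
def orbitRelOf {G : Type} (a : G → X → X) : X → X → Prop := fun x y => ∃ g : G, a g x = y

/-- The restriction of the relation `R` to the set `C` (extended by equality off `C`). -/
def restrictRel (R : X → X → Prop) (C : Set X) : X → X → Prop :=
  fun x y => x = y ∨ (R x y ∧ x ∈ C ∧ y ∈ C)

/-- `R` is hyperfinite: an increasing union of Borel equivalence relations with finite
classes. -/
def IsHyperfinite [MeasurableSpace X] (R : X → X → Prop) : Prop :=
  ∃ S : ℕ → X → X → Prop,
    (∀ n, Equivalence (S n)) ∧ (∀ n, MeasurableSet {p : X × X | S n p.1 p.2}) ∧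
    (∀ n x y, S n x y → S (n + 1) x y) ∧ (∀ n x, {y | S n x y}.Finite) ∧
    ∀ x y, R x y ↔ ∃ n, S n x y

/-- `R` is `μ`-amenable: off a `μ`-null set it is hyperfinite. -/
def MuAmenableRel [MeasurableSpace X] (R : X → X → Prop) (μ : Measure X) : Prop :=
  ∃ C : Set X, MeasurableSet C ∧ μ Cᶜ = 0 ∧ IsHyperfinite (restrictRel R C)

/-- `R` is `μ`-nowhere amenable: there is no positive measure Borel set on which the
restriction of `R` is amenable. -/
def MuNowhereAmenable [MeasurableSpace X] (R : X → X → Prop) (μ : Measure X) : Prop :=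
  ¬ ∃ A : Set X, MeasurableSet A ∧ 0 < μ A ∧
      ∃ C : Set X, MeasurableSet C ∧ C ⊆ A ∧ μ (A \ C) = 0 ∧
        IsHyperfinite (restrictRel R C)

/-- The symmetric irreflexive graph `E` has no cycles. -/
def HasNoGraphCycles (E : X → X → Prop) : Prop :=
  ¬ ∃ (n : ℕ) (x : ℕ → X), 3 ≤ n ∧ (∀ j < n, E (x j) (x (j + 1))) ∧ x n = x 0 ∧
      ∀ j < n, ∀ k < n, j ≠ k → x j ≠ x k

/-- `R` is treeable: it is generated by a Borel graphing whose connected components are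
acyclic. -/
def IsTreeable [MeasurableSpace X] (R : X → X → Prop) : Prop :=
  ∃ E : X → X → Prop,
    MeasurableSet {p : X × X | E p.1 p.2} ∧ (∀ x y, E x y → E y x) ∧ (∀ x, ¬ E x x) ∧
    (∀ x y, E x y → R x y) ∧ (∀ x y, R x y ↔ Relation.EqvGen E x y) ∧ HasNoGraphCycles E


/-- `Γ` admits an essential measurable splitting: some free p.m.p. action of `Γ` on a
standard probability space has orbit equivalence relation admitting a `μ`-essential
splitting (into Borel subequivalence relations). -/
def AdmitsEssentialMeasurableSplitting (Γ : Type) [Group Γ] : Prop :=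
  ∃ S : PmpSystem Γ, S.Free ∧
    ∃ R₀ R₁ : S.X → S.X → Prop,
      letI := S.mX
      MeasurableSet {p : S.X × S.X | R₀ p.1 p.2} ∧
      MeasurableSet {p : S.X × S.X | R₁ p.1 p.2} ∧
      EssentialSplitting S.μ (orbitRelOf S.act) R₀ R₁


variable {X Y Z : Type}

/-! ### Cocycles and superrigidity -/

/-- A measurable `L`-valued cocycle over the action `a`. -/
def IsCocycle {G L : Type} [Group G] [MeasurableSpace X] [Group L] [MeasurableSpace L]
    (a : G → X → X) (μ : Measure X) (c : G → X → L) : Prop :=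
  (∀ g : G, Measurable (c g)) ∧
    ∀ g h : G, ∀ᵐ x ∂μ, c (g * h) x = c g (a h x) * c h x

/-- Two cocycles are cohomologous. -/
def Cohomologous {G L : Type} [Group G] [MeasurableSpace X] [Group L] [MeasurableSpace L]
    (a : G → X → X) (μ : Measure X) (c₀ c₁ : G → X → L) : Prop :=
  ∃ f : X → L, Measurable f ∧ ∀ g : G, ∀ᵐ x ∂μ, f (a g x) * c₀ g x * (f x)⁻¹ = c₁ g x

/-- The action `a` is `L`-cocycle superrigid: every measurable `L`-valued cocycle is
cohomologous to a group homomorphism. -/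
def IsCocycleSuperrigid {G : Type} [Group G] [MeasurableSpace X]
    (L : Type) [Group L] [MeasurableSpace L] (a : G → X → X) (μ : Measure X) : Prop :=
  ∀ c : G → X → L, IsCocycle a μ c →
    ∃ ρ : G →* L, Cohomologous a μ c fun g _ => ρ g

/-- The action is `𝒢_ctble`-cocycle superrigid: `L`-cocycle superrigid for every countable
discrete group `L`. -/
def IsGctbleCocycleSuperrigid {G : Type} [Group G] [MeasurableSpace X]
    (a : G → X → X) (μ : Measure X) : Prop :=
  ∀ (L : Type) [Group L] [MeasurableSpace L] [MeasurableSingletonClass L],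
    Countable L → IsCocycleSuperrigid L a μ

/-- The action is strongly ergodic. -/
def IsStronglyErgodic {G : Type} [Group G] [MeasurableSpace X]
    (a : G → X → X) (μ : Measure X) : Prop :=
  ∀ A : ℕ → Set X, (∀ n, MeasurableSet (A n)) →
    (∀ g : G, Tendsto (fun n => μ (symmDiff (a g '' A n) (A n))) atTop (nhds 0)) →
    Tendsto (fun n => μ (A n) * μ (A n)ᶜ) atTop (nhds 0)

/-- Soficity of a group. -/
def IsSofic (G : Type) [Group G] : Prop :=
  ∀ (F : Finset G) (ε : ℝ), 0 < ε →
    ∃ (n : ℕ) (σ : G → Equiv.Perm (Fin n)),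
      (∀ g ∈ F, ∀ h ∈ F,
        (1 - ε) * n ≤ ((Finset.univ.filter fun i => σ (g * h) i = σ g (σ h i)).card : ℝ)) ∧
      ∀ g ∈ F, g ≠ 1 →
        (1 - ε) * n ≤ ((Finset.univ.filter fun i => σ g i ≠ i).card : ℝ)

/-! ### Internal free products -/

/-- `Γ` is the internal free product of its subgroups `Λ` and `H`: together they generate
`Γ` and no alternating product of nonidentity elements is the identity. -/
def IsInternalFreeProduct {Γ : Type} [Group Γ] (Λ H : Subgroup Γ) : Prop :=
  Λ ⊔ H = ⊤ ∧
    ∀ (n : ℕ) (w : Fin (n + 1) → Γ) (c : Fin (n + 1) → Bool),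
      (∀ i, w i ≠ 1) →
      (∀ i, if c i then w i ∈ Λ else w i ∈ H) →
      (∀ i : Fin n, c i.castSucc ≠ c i.succ) →
      (List.ofFn w).prod ≠ 1





/-! ### Cofinitely equivariant maps -/

/-- `x ∼_B y`: the functions differ in finitely many coordinates, and wherever they differ
the values lie in the same `B`-orbit. -/
def simRel (β : B → Y → Y) (x y : Γ → Y) : Prop :=
  {γ : Γ | x γ ≠ y γ}.Finite ∧ ∀ γ : Γ, x γ ≠ y γ → ∃ l : B, β l (x γ) = y γ

/-- `φ` is cofinitely equivariant with respect to the given actions of `B` and `C`. -/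
def CofinitelyEquivariant [Group Γ] [MeasurableSpace Y] (β : B → Y → Y) (χ : C → Z → Z)
    (νΓ : Measure (Γ → Y)) (φ : (Γ → Y) → (Γ → Z)) : Prop :=
  ∀ᵐ y ∂νΓ, ∀ x : Γ → Y, simRel β x y → ∀ γ : Γ,
    simRel χ (φ (shiftS γ x)) (shiftS γ (φ y))

/-- `φ` (with a.e. inverse `ψ`) is a bi-cofinitely equivariant measure space isomorphism. -/
def BiCofinitelyEquivariant [Group Γ] [MeasurableSpace Y] [MeasurableSpace Z]
    (β : B → Y → Y) (χ : C → Z → Z) (νΓ : Measure (Γ → Y)) (ηΓ : Measure (Γ → Z))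
    (φ : (Γ → Y) → (Γ → Z)) (ψ : (Γ → Z) → (Γ → Y)) : Prop :=
  MeasurePreserving φ νΓ ηΓ ∧ Measurable ψ ∧
    (∀ᵐ y ∂νΓ, ψ (φ y) = y) ∧ (∀ᵐ z ∂ηΓ, φ (ψ z) = z) ∧
    CofinitelyEquivariant β χ νΓ φ ∧ CofinitelyEquivariant χ β ηΓ ψ

/-! ### Stable orbit equivalence -/

/-- The actions `a` and `b` are stably orbit equivalent. -/
def StablyOrbitEquivalent {G H : Type} [MeasurableSpace X] [MeasurableSpace Y]
    (a : G → X → X) (b : H → Y → Y) (μ : Measure X) (ν : Measure Y) : Prop :=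
  ∃ (X₀ : Set X) (Y₀ : Set Y) (φ : X → Y),
    MeasurableSet X₀ ∧ MeasurableSet Y₀ ∧ 0 < μ X₀ ∧ 0 < ν Y₀ ∧
    (∀ᵐ x ∂μ.restrict X₀, φ x ∈ Y₀) ∧
    MeasurePreserving φ ((μ X₀)⁻¹ • μ.restrict X₀) ((ν Y₀)⁻¹ • ν.restrict Y₀) ∧
    (∃ ψ : Y → X, Measurable ψ ∧ (∀ᵐ x ∂μ.restrict X₀, ψ (φ x) = x) ∧
      (∀ᵐ y ∂ν.restrict Y₀, φ (ψ y) = y)) ∧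
    ∀ᵐ x ∂μ.restrict X₀,
      (∀ g : G, a g x ∈ X₀ → ∃ h : H, φ (a g x) = b h (φ x)) ∧
      (∀ h : H, b h (φ x) ∈ Y₀ → ∃ g : G, a g x ∈ X₀ ∧ φ (a g x) = b h (φ x))

/-!
If `(A n)` is asymptotically invariant but `μ (A n) * μ (A n)ᶜ` does not tend to `0`, pass to a
subsequence along which `∑ m, μ (γ⁻¹ A m ∆ A m) < ∞` for every `γ` while `μ (A m)` stays away
from `0` and `1`. By Borel–Cantelli the coboundary `c` of the formal sum `∑ m, w m • 1_{A m}`,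
with weights `w m = (m + 3)!`, is then an honest `ℤ`-valued cocycle. Superrigidity gives
`c γ = ρ γ + F - F ∘ γ` with `ρ : Γ → ℤ` a homomorphism, so `H n = F + ∑_{m < n} w m • 1_{A m}`
is `ρ`-equivariant modulo `w n`. On the large set `{|F| ≤ M}` the values of `H n` differ by less
than `w n / 2`. If `ρ ≠ 0`, some `γ` shifts `H n` by `w n / 2` modulo `w n`, impossible on a set
of measure `> 1/2`. If `ρ = 0`, ergodicity makes `H (n + 1)` essentially constant on that set,
whereas it jumps by `w n` across `A n`.
-/

def weight (m : ℕ) : ℤ := (m + 3).factorial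

lemma weight_pos (m : ℕ) : 0 < weight m := Int.natCast_pos.2 (Nat.factorial_pos _)

lemma weight_dvd_weight {n m : ℕ} (h : n ≤ m) : weight n ∣ weight m :=
  Int.natCast_dvd_natCast.2 (Nat.factorial_dvd_factorial (by omega))

lemma two_mul_dvd_weight {k : ℤ} {n : ℕ} (hk : k ≠ 0) (hkn : 2 * k.natAbs ≤ n + 3) :
    2 * k ∣ weight n := by
  rw [weight, ← Int.natAbs_dvd_natAbs, Int.natAbs_mul, Int.natAbs_natCast]
  exact Nat.dvd_factorial (by simp [Int.natAbs_pos.2 hk]) hkn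

lemma sum_weight_nonneg (n : ℕ) : 0 ≤ ∑ m ∈ Finset.range n, weight m :=
  Finset.sum_nonneg fun m _ => (weight_pos m).le

lemma two_mul_sum_weight_add_lt (n : ℕ) : 2 * ∑ m ∈ Finset.range n, weight m + n < weight n := by
  induction n with
  | zero => simpa using weight_pos 0
  | succ n ih =>
    have hsucc : weight (n + 1) = (n + 4) * weight n := by
      simp only [weight, show n + 1 + 3 = (n + 3) + 1 by omega, Nat.factorial_succ]
      push_cast; ring
    rw [Finset.sum_range_succ, hsucc]
    push_cast
    nlinarith [weight_pos n]

lemma _root_.Int.not_modEq_add_of_abs_sub_lt {a b h : ℤ} (hab : |a - b| < h) :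
    ¬ a ≡ b + h [ZMOD 2 * h] := by
  intro hmod
  have := Int.eq_zero_of_abs_lt_dvd hmod.dvd (by rw [abs_lt] at hab ⊢; constructor <;> linarith)
  rw [abs_lt] at hab
  linarith

lemma exists_subseq_forall_tsum_ne_top {ι : Type*} [Countable ι] {u : ι → ℕ → ℝ≥0∞}
    (hu : ∀ i, Tendsto (u i) atTop (nhds 0)) (hu_le : ∀ i n, u i n ≤ 1) {p : ℕ → Prop}
    (hp : ∃ᶠ n in atTop, p n) : ∃ ψ : ℕ → ℕ, (∀ k, p (ψ k)) ∧ ∀ i, ∑' k, u i (ψ k) ≠ ∞ := by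
  obtain ⟨e, he⟩ := Countable.exists_injective_nat ι
  have hchoice : ∀ k, ∃ n, p n ∧ ∀ i ∈ {i | e i ≤ k}, u i n ≤ 2⁻¹ ^ k := by
    intro k
    have hev : ∀ᶠ n in atTop, ∀ i ∈ {i | e i ≤ k}, u i n ≤ 2⁻¹ ^ k :=
      (eventually_all_finite ((finite_le_nat k).preimage he.injOn)).2 fun i _ =>
        ENNReal.tendsto_nhds_zero.1 (hu i) _ (ENNReal.pow_pos (by simp) k)
    exact (hp.and_eventually hev).exists
  choose ψ hψp hψu using hchoice
  refine ⟨ψ, hψp, fun i => ne_top_of_le_ne_top (b := ∑' k, 2 ^ e i * 2⁻¹ ^ k) ?_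
    (ENNReal.tsum_le_tsum fun k => ?_)⟩
  · rw [ENNReal.tsum_mul_left, ENNReal.tsum_geometric, ENNReal.one_sub_inv_two, inv_inv]
    exact ENNReal.mul_ne_top (by simp) (by simp)
  · rcases le_or_gt (e i) k with h | h
    · exact (hψu k i h).trans (le_mul_of_one_le_left' (one_le_pow₀ one_le_two))
    · calc u i (ψ k) ≤ 1 := hu_le _ _
        _ = 2 ^ k * 2⁻¹ ^ k := by
          rw [← mul_pow, ENNReal.mul_inv_cancel two_ne_zero ENNReal.ofNat_ne_top, one_pow]
        _ ≤ 2 ^ e i * 2⁻¹ ^ k := by gcongr; exact one_le_two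

lemma ae_finite_setOf_mem {α : Type*} [MeasurableSpace α] {μ : Measure α} {s : ℕ → Set α}
    (hs : ∑' i, μ (s i) ≠ ∞) : ∀ᵐ x ∂μ, {i | x ∈ s i}.Finite := by
  filter_upwards [ae_eventually_notMem hs] with x hx
  simpa [← Nat.cofinite_eq_atTop] using hx

lemma measurable_finsum_int {α : Type*} [MeasurableSpace α] {f : ℕ → α → ℤ}
    (hf : ∀ m, Measurable (f m)) : Measurable fun x => ∑ᶠ m, f m x := by
  classical
  -- the truncations are eventually constant, equal to the finite sum or to its junk value `0`
  let trunc (N : ℕ) (x : α) : ℤ :=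
    if ∀ m, N ≤ m → f m x = 0 then ∑ m ∈ Finset.range N, f m x else 0
  refine measurable_of_tendsto_metrizable (f := trunc) (fun N => ?_)
    (tendsto_pi_nhds.2 fun x => ?_)
  · refine Measurable.ite ?_ (Finset.measurable_sum _ fun m _ => hf m) measurable_const
    simp only [ofPred_forall]
    exact .iInter fun m => .iInter fun _ => measurableSet_eq_fun (hf m) measurable_const
  · by_cases hfin : (support fun m => f m x).Finite
    · obtain ⟨N, hN⟩ := hfin.bddAbove
      have hvan : ∀ N', N < N' → ∀ m, N' ≤ m → f m x = 0 := fun N' hN' m hm =>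
        by_contra fun hne => absurd (hN hne) (by omega)
      refine tendsto_atTop_of_eventually_const (i₀ := N + 1) fun N' hN' => ?_
      rw [show trunc N' x = _ from if_pos (hvan N' hN'), finsum_eq_sum_of_support_subset]
      intro m hm
      simpa using not_le.1 fun h => hm (hvan N' hN' m h)
    · refine tendsto_atTop_of_eventually_const (i₀ := 0) fun N _ => ?_
      rw [finsum_of_infinite_support hfin]
      refine if_neg fun hvan => hfin ((finite_lt_nat N).subset fun m hm => ?_)
      exact not_le.1 fun h => hm (hvan m h)

lemma _root_.Int.finsum_modEq_sum_range {f : ℕ → ℤ} (hf : (support f).Finite) {q : ℤ} {n : ℕ}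
    (hq : ∀ m, n ≤ m → q ∣ f m) : ∑ᶠ m, f m ≡ ∑ m ∈ Finset.range n, f m [ZMOD q] := by
  classical
  set s := hf.toFinset ∪ Finset.range n
  rw [finsum_eq_sum_of_support_subset f (s := s) (by simp [s]),
    ← Finset.sum_sdiff (Finset.subset_union_right : Finset.range n ⊆ s)]
  refine (Int.modEq_iff_dvd.2 ?_).symm
  rw [add_sub_cancel_right]
  exact Finset.dvd_sum fun m hm => hq m (by simpa using (Finset.mem_sdiff.1 hm).2)

lemma measure_inter_ne_zero_of_measure_compl_lt {α : Type*} [MeasurableSpace α] {μ : Measure α}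
    {s t : Set α} (h : μ tᶜ < μ s) : μ (s ∩ t) ≠ 0 := by
  intro h0
  have := (measure_le_inter_add_sdiff μ s t).trans (add_le_add h0.le (measure_mono
    (fun x hx => hx.2 : s \ t ⊆ tᶜ)))
  rw [zero_add] at this
  exact this.not_gt h

lemma _root_.MeasureTheory.MeasurePreserving.measure_inter_preimage_ne_zero {α : Type*}
    [MeasurableSpace α] {μ : Measure α} [IsProbabilityMeasure μ] {f : α → α} (hf : MeasurePreserving f μ μ)
    {s : Set α} (hs : MeasurableSet s) (h : 2 * μ sᶜ < 1) : μ (s ∩ f ⁻¹' s) ≠ 0 := by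
  refine measure_inter_ne_zero_of_measure_compl_lt ?_
  rw [← preimage_compl, hf.measure_preimage hs.compl.nullMeasurableSet]
  by_contra! hle
  rw [← prob_add_prob_compl (μ := μ) hs, two_mul] at h
  exact (add_le_add_left hle _).not_gt h

lemma exists_measure_abs_gt_lt {α : Type*} [MeasurableSpace α] {μ : Measure α}
    [IsFiniteMeasure μ] {F : α → ℤ} (hF : Measurable F) {ε : ℝ≥0∞} (hε : 0 < ε) :
    ∃ M : ℕ, μ {x | (M : ℤ) < |F x|} < ε := by
  have hlim := tendsto_measure_iInter_atTop (μ := μ) (s := fun M : ℕ => {x | (M : ℤ) < |F x|})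
    (fun M => (measurableSet_lt measurable_const hF.abs).nullMeasurableSet)
    (fun i j hij x (hx : (j : ℤ) < |F x|) => show (i : ℤ) < |F x| from
      (Int.ofNat_le.2 hij).trans_lt hx) ⟨0, measure_ne_top μ _⟩
  have hempty : (⋂ M : ℕ, {x | (M : ℤ) < |F x|}) = ∅ :=
    eq_empty_of_forall_notMem fun x hx => (mem_iInter.1 hx (F x).natAbs).ne
      (Int.abs_eq_natAbs _).symm
  rw [hempty, measure_empty] at hlim
  exact (hlim.eventually (gt_mem_nhds hε)).exists

section Action

variable {G : Type} [Group G] [MeasurableSpace X] {μ : Measure X} {a : G → X → X}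

lemma IsMpAction.preimage_eq_image_inv (h : IsMpAction a μ) (g : G) (s : Set X) :
    a g ⁻¹' s = a g⁻¹ '' s := by
  have hinv : ∀ g x, a g⁻¹ (a g x) = x := fun g x => by rw [← h.2.1, inv_mul_cancel, h.1]
  refine (congrFun (image_eq_preimage_of_inverse (fun x => ?_) (hinv g)) s).symm
  simpa using hinv g⁻¹ x

lemma IsErgodicAction.measure_eq_zero_or_compl_of_ae_invariant [Countable G]
    (herg : IsErgodicAction a μ) (hmp : IsMpAction a μ) {s : Set X} (hs : MeasurableSet s)
    (hinv : ∀ g, a g ⁻¹' s =ᵐ[μ] s) : μ s = 0 ∨ μ sᶜ = 0 := by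
  -- `⋂ g, a g ⁻¹' s` is strictly invariant and a.e. equal to `s`
  set t := ⋂ g, a g ⁻¹' s
  have hts : t =ᵐ[μ] s := by
    simpa only [iInter_const] using Filter.EventuallyEq.countable_iInter hinv
  have ht_inv : ∀ g, a g ⁻¹' t = t := fun g => by
    ext x
    simp only [t, mem_preimage, mem_iInter, ← hmp.2.1]
    exact (Equiv.mulRight g).forall_congr_right (q := fun h => a h x ∈ s)
  rw [← measure_congr hts, ← measure_congr hts.compl]
  exact herg t (.iInter fun g => (hmp.2.2 g).measurable hs) ht_inv

lemma IsErgodicAction.exists_ae_eq_const [Countable G] [NeZero μ] (herg : IsErgodicAction a μ)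
    (hmp : IsMpAction a μ) {Y : Type*} [MeasurableSpace Y] [MeasurableSingletonClass Y]
    [Countable Y] {f : X → Y} (hf : Measurable f) (hinv : ∀ g, ∀ᵐ x ∂μ, f (a g x) = f x) :
    ∃ y, ∀ᵐ x ∂μ, f x = y := by
  by_contra hne
  have hnull : ∀ y, μ (f ⁻¹' {y}) = 0 := fun y => by
    refine (herg.measure_eq_zero_or_compl_of_ae_invariant hmp (hf (measurableSet_singleton y))
      fun g => ?_).resolve_right fun h => hne ⟨y, ae_iff.2 h⟩
    rw [Filter.eventuallyEq_set]
    filter_upwards [hinv g] with x hx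
    simp [hx]
  refine NeZero.ne μ (Measure.measure_univ_eq_zero.1 ?_)
  exact measure_mono_null (fun x _ => mem_iUnion.2 ⟨f x, rfl⟩) (measure_iUnion_null hnull)

end Action

section Cocycle

variable {G : Type} {a : G → X → X} {A : ℕ → Set X}

noncomputable def weightedCount (A : ℕ → Set X) (n : ℕ) (x : X) : ℤ :=
  ∑ m ∈ Finset.range n, weight m * (A m).indicator 1 x

noncomputable def telescopingTerm (a : G → X → X) (A : ℕ → Set X) (g : G) (x : X) (m : ℕ) : ℤ :=
  weight m * ((A m).indicator 1 (a g x) - (A m).indicator 1 x)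

/-- The coboundary of the formal sum `∑ m, weight m • 1_{A m}`. The sum is finite at `x` when `x`
lies in only finitely many of the sets `a g ⁻¹' A m ∆ A m`, and takes the junk value `0`
elsewhere. -/
noncomputable def telescopingCocycle (a : G → X → X) (A : ℕ → Set X) (g : G) (x : X) : ℤ :=
  ∑ᶠ m, telescopingTerm a A g x m

lemma weightedCount_nonneg (A : ℕ → Set X) (n : ℕ) (x : X) : 0 ≤ weightedCount A n x :=
  Finset.sum_nonneg fun m _ =>
    mul_nonneg (weight_pos m).le (indicator_nonneg (fun _ _ => zero_le_one) x)

lemma weightedCount_le (A : ℕ → Set X) (n : ℕ) (x : X) :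
    weightedCount A n x ≤ ∑ m ∈ Finset.range n, weight m :=
  Finset.sum_le_sum fun m _ =>
    mul_le_of_le_one_right (weight_pos m).le (indicator_le_self' (fun _ _ => zero_le_one) x)

lemma weightedCount_succ (A : ℕ → Set X) (n : ℕ) (x : X) :
    weightedCount A (n + 1) x = weightedCount A n x + weight n * (A n).indicator 1 x :=
  Finset.sum_range_succ _ _

lemma abs_sub_le_of_abs_le {F : X → ℤ} {M : ℕ} {x y : X} (hx : |F x| ≤ M) (hy : |F y| ≤ M)
    (A : ℕ → Set X) (n : ℕ) :
    |(F x + weightedCount A n x) - (F y + weightedCount A n y)| ≤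
      2 * M + ∑ m ∈ Finset.range n, weight m := by
  have := weightedCount_nonneg A n x
  have := weightedCount_nonneg A n y
  have := weightedCount_le A n x
  have := weightedCount_le A n y
  rw [abs_le] at hx hy ⊢
  constructor <;> linarith

lemma support_telescopingTerm_subset (g : G) (x : X) :
    support (telescopingTerm a A g x) ⊆ {m | x ∈ symmDiff (a g ⁻¹' A m) (A m)} := by
  intro m hm
  by_contra hx
  simp only [mem_ofPred_eq, mem_symmDiff, mem_preimage, not_or, not_and, not_not] at hx
  by_cases h : x ∈ A m <;> simp_all [telescopingTerm]

lemma telescopingCocycle_modEq {g : G} {x : X} (hfin : (support (telescopingTerm a A g x)).Finite)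
    (n : ℕ) : telescopingCocycle a A g x ≡
      weightedCount A n (a g x) - weightedCount A n x [ZMOD weight n] := by
  rw [weightedCount, weightedCount, ← Finset.sum_sub_distrib]
  simp_rw [← mul_sub]
  exact Int.finsum_modEq_sum_range hfin fun m hm => (weight_dvd_weight hm).mul_right _

section Measurable

variable [MeasurableSpace X] {μ : Measure X}

lemma measurable_weightedCount (hA : ∀ m, MeasurableSet (A m)) (n : ℕ) :
    Measurable (weightedCount A n) :=
  Finset.measurable_sum _ fun m _ => (measurable_one.indicator (hA m)).const_mul _

lemma measurable_telescopingCocycle (ha : ∀ g, Measurable (a g))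
    (hA : ∀ m, MeasurableSet (A m)) (g : G) : Measurable (telescopingCocycle a A g) :=
  measurable_finsum_int fun m => (((measurable_one.indicator (hA m)).comp (ha g)).sub
    (measurable_one.indicator (hA m))).const_mul _

lemma ae_finite_support_telescopingTerm {g : G}
    (hsum : ∑' m, μ (symmDiff (a g ⁻¹' A m) (A m)) ≠ ∞) :
    ∀ᵐ x ∂μ, (support (telescopingTerm a A g x)).Finite := by
  filter_upwards [ae_finite_setOf_mem hsum] with x hx
  exact hx.subset (support_telescopingTerm_subset g x)

lemma telescopingCocycle_mul [Group G] (hmp : IsMpAction a μ)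
    (hsum : ∀ g, ∑' m, μ (symmDiff (a g ⁻¹' A m) (A m)) ≠ ∞) (g h : G) :
    ∀ᵐ x ∂μ, telescopingCocycle a A (g * h) x =
      telescopingCocycle a A g (a h x) + telescopingCocycle a A h x := by
  filter_upwards [(hmp.2.2 h).quasiMeasurePreserving.ae
      (ae_finite_support_telescopingTerm (hsum g)),
    ae_finite_support_telescopingTerm (hsum h)] with x hg hh
  rw [telescopingCocycle, telescopingCocycle, telescopingCocycle, ← finsum_add_distrib hg hh]
  refine finsum_congr fun m => ?_
  simp only [telescopingTerm, hmp.2.1]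
  ring

end Measurable

end Cocycle

section Cohomology

variable {G : Type} [Group G] [MeasurableSpace X] {μ : Measure X} {a : G → X → X}
  {A : ℕ → Set X}

lemma IsCocycleSuperrigid.exists_hom_cohomologous_int
    (hsr : @IsCocycleSuperrigid X G _ _ (Multiplicative ℤ) _ ⊤ a μ) {c : G → X → ℤ}
    (hc : ∀ g, Measurable (c g)) (hcoc : ∀ g h, ∀ᵐ x ∂μ, c (g * h) x = c g (a h x) + c h x) :
    ∃ (ρ : G →* Multiplicative ℤ) (F : X → ℤ), Measurable F ∧
      ∀ g, ∀ᵐ x ∂μ, F (a g x) + c g x = F x + (ρ g).toAdd := by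
  obtain ⟨ρ, f, hf, hcoh⟩ := hsr (fun g x => .ofAdd (c g x)) ⟨hc, fun g h => by
    filter_upwards [hcoc g h] with x hx
    rw [hx, ofAdd_add]⟩
  refine ⟨ρ, fun x => (f x).toAdd, hf, fun g => ?_⟩
  filter_upwards [hcoh g] with x hx
  rw [← hx]
  simp only [toAdd_mul, toAdd_inv, toAdd_ofAdd]
  ring

lemma modEq_weight_of_cohomologous (hsum : ∀ g, ∑' m, μ (symmDiff (a g ⁻¹' A m) (A m)) ≠ ∞)
    {F : X → ℤ} {ρ : G →* Multiplicative ℤ}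
    (hcoh : ∀ g, ∀ᵐ x ∂μ, F (a g x) + telescopingCocycle a A g x = F x + (ρ g).toAdd)
    (g : G) (n : ℕ) :
    ∀ᵐ x ∂μ, F (a g x) + weightedCount A n (a g x) ≡
      F x + weightedCount A n x + (ρ g).toAdd [ZMOD weight n] := by
  filter_upwards [hcoh g, ae_finite_support_telescopingTerm (hsum g)] with x hx hfin
  have h := ((telescopingCocycle_modEq hfin n).add_left (F (a g x))).add_right
    (weightedCount A n x)
  rw [hx] at h
  convert h.symm using 1 <;> ring

end Cohomology

section Rigidity

variable {G : Type} [Group G] [MeasurableSpace X] {μ : Measure X} [IsProbabilityMeasure μ]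
  {a : G → X → X} {A : ℕ → Set X} {F : X → ℤ}

lemma hom_eq_one_of_forall_modEq_weight (hmp : ∀ g, MeasurePreserving (a g) μ μ)
    (hF : Measurable F) {ρ : G →* Multiplicative ℤ}
    (hcong : ∀ g n, ∀ᵐ x ∂μ, F (a g x) + weightedCount A n (a g x) ≡
      F x + weightedCount A n x + (ρ g).toAdd [ZMOD weight n])
    {M : ℕ} (hM : 2 * μ {x | |F x| ≤ M}ᶜ < 1) : ρ = 1 := by
  by_contra hρ
  obtain ⟨g₁, hg₁⟩ : ∃ g, (ρ g).toAdd ≠ 0 := by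
    by_contra! h
    exact hρ (MonoidHom.ext fun g => toAdd_eq_zero.1 (h g))
  set k := (ρ g₁).toAdd
  set n := 4 * M + 2 * k.natAbs
  obtain ⟨j, hj⟩ := two_mul_dvd_weight hg₁ (n := n) (by omega)
  rw [mul_assoc] at hj
  -- `g₁ ^ j` shifts `F + weightedCount A n` by half the modulus
  have hρj : (ρ (g₁ ^ j)).toAdd = k * j := by rw [map_zpow, toAdd_zpow, smul_eq_mul, mul_comm]
  have hE : MeasurableSet {x | |F x| ≤ M} := measurableSet_le hF.abs measurable_const
  obtain ⟨x, ⟨hx, hgx⟩, hmod⟩ := Measure.exists_mem_of_measure_ne_zero_of_ae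
    ((hmp (g₁ ^ j)).measure_inter_preimage_ne_zero hE hM) (ae_restrict_of_ae (hcong (g₁ ^ j) n))
  rw [hρj, hj] at hmod
  refine Int.not_modEq_add_of_abs_sub_lt ?_ hmod
  have := abs_sub_le_of_abs_le hgx hx A n
  have := two_mul_sum_weight_add_lt n
  rw [hj] at this
  omega

lemma measure_inter_eq_zero_or_measure_diff_eq_zero [Countable G] (hmp : IsMpAction a μ)
    (herg : IsErgodicAction a μ) (hA : ∀ m, MeasurableSet (A m)) (hF : Measurable F)
    (hcong : ∀ g n, ∀ᵐ x ∂μ, F (a g x) + weightedCount A n (a g x) ≡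
      F x + weightedCount A n x [ZMOD weight n])
    (M : ℕ) : μ ({x | |F x| ≤ M} ∩ A (2 * M)) = 0 ∨ μ ({x | |F x| ≤ M} \ A (2 * M)) = 0 := by
  set n := 2 * M
  -- by ergodicity `F + weightedCount A (n + 1)` is a.e. constant modulo `weight (n + 1)`, hence
  -- a.e. constant on `{|F| ≤ M}`; there it would jump by `weight n` across `A n`
  obtain ⟨v, hv⟩ := herg.exists_ae_eq_const hmp
    (f := fun x => (F x + weightedCount A (n + 1) x) % weight (n + 1))
    ((Measurable.of_discrete (f := fun z : ℤ => z % weight (n + 1))).comp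
      (hF.add (measurable_weightedCount hA (n + 1))) :)
    (fun g => hcong g (n + 1))
  by_contra! h
  obtain ⟨x, ⟨hxE, hxA⟩, hxv⟩ :=
    Measure.exists_mem_of_measure_ne_zero_of_ae h.1 (ae_restrict_of_ae hv)
  obtain ⟨y, ⟨hyE, hyA⟩, hyv⟩ :=
    Measure.exists_mem_of_measure_ne_zero_of_ae h.2 (ae_restrict_of_ae hv)
  have heq : F x + weightedCount A (n + 1) x = F y + weightedCount A (n + 1) y := by
    refine (sub_eq_zero.1 (Int.eq_zero_of_abs_lt_dvd (Int.ModEq.dvd (hyv.trans hxv.symm)) ?_))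
    have := abs_sub_le_of_abs_le hxE hyE A (n + 1)
    have := two_mul_sum_weight_add_lt (n + 1)
    have := sum_weight_nonneg (n + 1)
    omega
  rw [weightedCount_succ, weightedCount_succ, indicator_of_mem hxA, indicator_of_notMem hyA] at heq
  simp only [Pi.one_apply, mul_one, mul_zero, add_zero] at heq
  have hbound := abs_le.1 (abs_sub_le_of_abs_le hyE hxE A n)
  have := two_mul_sum_weight_add_lt n
  have := sum_weight_nonneg n
  omega

theorem not_isCocycleSuperrigid_of_tsum_ne_top [Countable G] (hmp : IsMpAction a μ)
    (herg : IsErgodicAction a μ) (hA : ∀ m, MeasurableSet (A m))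
    (hsum : ∀ g, ∑' m, μ (symmDiff (a g ⁻¹' A m) (A m)) ≠ ∞) {ε : ℝ≥0∞} (hε : 0 < ε)
    (hAε : ∀ m, ε < μ (A m) ∧ ε < μ (A m)ᶜ) :
    ¬ @IsCocycleSuperrigid X G _ _ (Multiplicative ℤ) _ ⊤ a μ := by
  intro hsr
  obtain ⟨ρ, F, hF, hcoh⟩ := hsr.exists_hom_cohomologous_int
    (measurable_telescopingCocycle (fun g => (hmp.2.2 g).measurable) hA)
    (telescopingCocycle_mul hmp hsum)
  have hcong := modEq_weight_of_cohomologous hsum hcoh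
  obtain ⟨M, hM⟩ := exists_measure_abs_gt_lt (μ := μ) hF hε
  have hMc : μ {x | |F x| ≤ M}ᶜ < ε := by simpa only [compl_ofPred, not_le] using hM
  have hρ : ρ = 1 := hom_eq_one_of_forall_modEq_weight hmp.2.2 hF hcong (M := M) <|
    calc 2 * μ {x | |F x| ≤ M}ᶜ ≤ ε + ε := by rw [two_mul]; exact add_le_add hMc.le hMc.le
      _ < μ (A 0) + μ (A 0)ᶜ := ENNReal.add_lt_add (hAε 0).1 (hAε 0).2
      _ = 1 := prob_add_prob_compl (hA 0)
  simp only [hρ, MonoidHom.one_apply, toAdd_one, add_zero] at hcong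
  rcases measure_inter_eq_zero_or_measure_diff_eq_zero hmp herg hA hF hcong M with h | h
  · exact measure_inter_ne_zero_of_measure_compl_lt (hMc.trans (hAε _).1) (by rwa [inter_comm])
  · exact measure_inter_ne_zero_of_measure_compl_lt (hMc.trans (hAε _).2)
      (by rwa [inter_comm, ← sdiff_eq])

end Rigidity

theorem stronglyErgodic_of_Z_cocycle_superrigid_general
    (Γ X : Type) [Group Γ] [Countable Γ]
    [MeasurableSpace X] (μ : Measure X) [IsProbabilityMeasure μ]
    (a : Γ → X → X) (ha : IsPmpAction a μ) (herg : IsErgodicAction a μ)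
    (hsr : @IsCocycleSuperrigid X Γ _ _ (Multiplicative ℤ) _ ⊤ a μ) :
    IsStronglyErgodic a μ := by
  intro A hA hA_inv
  by_contra hA_split
  obtain ⟨ε, hε, hfreq⟩ : ∃ ε > 0, ∃ᶠ n in atTop, ε < μ (A n) * μ (A n)ᶜ := by
    simpa only [ENNReal.tendsto_nhds_zero, not_forall, not_eventually, not_le, exists_prop]
      using hA_split
  obtain ⟨ψ, hψε, hψsum⟩ := exists_subseq_forall_tsum_ne_top hA_inv (fun _ _ => prob_le_one) hfreq
  refine not_isCocycleSuperrigid_of_tsum_ne_top ha.2 herg (fun k => hA (ψ k))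
    (fun g => ?_) hε (fun k => ⟨?_, ?_⟩) hsr
  · simpa only [ha.2.preimage_eq_image_inv] using hψsum g⁻¹
  · exact (hψε k).trans_le (mul_le_of_le_one_right' prob_le_one)
  · exact (hψε k).trans_le (mul_le_of_le_one_left' prob_le_one)

/-- An ergodic p.m.p. action that is `ℤ`-cocycle superrigid (with `ℤ`
discrete) is strongly ergodic. -/
theorem stronglyErgodic_of_Z_cocycle_superrigid
    (Γ X : Type) [Group Γ] [Countable Γ]
    [MeasurableSpace X] [StandardBorelSpace X] (μ : Measure X) [IsProbabilityMeasure μ]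
    (a : Γ → X → X) (ha : IsPmpAction a μ) (herg : IsErgodicAction a μ)
    (hsr : @IsCocycleSuperrigid X Γ _ _ (Multiplicative ℤ) _ ⊤ a μ) :
    IsStronglyErgodic a μ :=
  stronglyErgodic_of_Z_cocycle_superrigid_general Γ X μ a ha herg hsr

end OEW
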